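/- arXiv:2405.08361 — 5 statements merged into one kernel-verified Lean document; each statement's English description precedes it below -/
import Mathlib

section
/- Let (C, J) and (D, K) be sites and let F : C → D be a functor which is fully faithful, continuous (composition with F^op carries K-sheaves of types to J-sheaves of types; this holds e.g. when F sends covering families to covering families and preserves the relevant pullbacks), and cocontinuous (for every X in C and every K-covering sieve S of F(X), the sieve of morphisms g : Y → X with F(g) ∈ S is a J-covering sieve of X). Assume J is subcanonical (every representable presheaf on C is a J-sheaf). Then the functor F_# : Sh(C, J) → Sh(D, K), defined as the left adjoint of the restriction functor F^* : Sh(D, K) → Sh(C, J) given by precomposition with F (i.e., F_# is the sheafification of the left Kan extension along F^op), is fully faithful. -/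
/-!
`F_#` is left adjoint to `F^*`, which for a cocontinuous `F` is itself left adjoint to the
pushforward `F_*` (right Kan extension along `F.op`), so `F_# ⊣ F^* ⊣ F_*` is an adjoint triple.
For fully faithful `F` the counit of `F.op.ran` is an isomorphism, so `F_*` is fully faithful,
and in an adjoint triple the outer functors are fully faithful together.
-/

open CategoryTheory

universe u

namespace CategoryTheory.Functor

variable {C D : Type*} [Category C] [Category D] (F : C ⥤ D) [F.Full] [F.Faithful]
  (A : Type*) [Category A] (J : GrothendieckTopology C) (K : GrothendieckTopology D)
  [F.IsContinuous J K] [F.IsCocontinuous J K]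
  [∀ P : Cᵒᵖ ⥤ A, F.op.HasPointwiseRightKanExtension P]

instance isIso_sheafAdjunctionCocontinuous_counit :
    IsIso (F.sheafAdjunctionCocontinuous A J K).counit := by
  rw [NatTrans.isIso_iff_isIso_app]
  intro P
  rw [← ObjectProperty.isIso_hom_iff, sheafAdjunctionCocontinuous_counit_app_hom]
  exact NatIso.isIso_app_of_isIso _ _

noncomputable def fullyFaithfulSheafPushforwardCocontinuous :
    (F.sheafPushforwardCocontinuous A J K).FullyFaithful :=
  (F.sheafAdjunctionCocontinuous A J K).fullyFaithfulROfIsIsoCounit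

end CategoryTheory.Functor

theorem sheafPullback_fullyFaithful_of_fullyFaithful_continuous_cocontinuous_general
    {C : Type u} [SmallCategory C] {D : Type u} [SmallCategory D]
    (J : GrothendieckTopology C) (K : GrothendieckTopology D)
    (F : C ⥤ D) [F.Full] [F.Faithful]
    [F.IsContinuous J K] [F.IsCocontinuous J K]
    (Fsharp : Sheaf J (Type u) ⥤ Sheaf K (Type u))
    (adj : Fsharp ⊣ F.sheafPushforwardContinuous (Type u) J K) :
    Fsharp.Full ∧ Fsharp.Faithful := by
  let triple := Adjunction.Triple.mk adj (F.sheafAdjunctionCocontinuous (Type u) J K)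
  let ff : Fsharp.FullyFaithful :=
    triple.fullyFaithfulEquiv.symm (F.fullyFaithfulSheafPushforwardCocontinuous (Type u) J K)
  exact ⟨ff.full, ff.faithful⟩

theorem sheafPullback_fullyFaithful_of_fullyFaithful_continuous_cocontinuous
    {C : Type u} [SmallCategory C] {D : Type u} [SmallCategory D]
    (J : GrothendieckTopology C) (K : GrothendieckTopology D)
    (F : C ⥤ D) [F.Full] [F.Faithful]
    [F.IsContinuous J K] [F.IsCocontinuous J K]
    [J.Subcanonical]
    (Fsharp : Sheaf J (Type u) ⥤ Sheaf K (Type u))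
    (adj : Fsharp ⊣ F.sheafPushforwardContinuous (Type u) J K) :
    Fsharp.Full ∧ Fsharp.Faithful :=
  sheafPullback_fullyFaithful_of_fullyFaithful_continuous_cocontinuous_general J K F Fsharp adj
end

section
/- Let C be a category with finite coproducts and let J be a Grothendieck topology on C generated by a pretopology τ. Assume: (i) coproducts in C are disjoint, i.e., the coprojections U_i → ∐_j U_j are monomorphisms and for i ≠ j the pullback U_i ×_{∐ U_k} U_j is an initial object of C; (ii) the empty family is a τ-covering family of the initial object; and (iii) for every finite family {U_i}_{i∈I} of objects of C, the family of coprojections {U_i → ∐_{j∈I} U_j}_{i∈I} is a τ-covering family. Then for every finite family {U_i}_{i∈I} of objects of C, the canonical morphism ∐_{i∈I} a(yU_i) → a(y(∐_{i∈I} U_i)) in the category Sh(C, J) of sheaves of types is an isomorphism, where a denotes sheafification and y the Yoneda embedding. -/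
/-!
By the adjunction `a ⊣ forget` and Yoneda, maps `a(yX) ⟶ F` into a sheaf `F` are the elements of
`F(X)`. So the cofan `a(yUᵢ) ⟶ a(y(∐ U))` is a coproduct iff every sheaf `F` restricts `F(∐ U)`
bijectively onto `∏ F(Uᵢ)`. The coprojections form a covering family, so it suffices that every
family in `∏ F(Uᵢ)` is compatible. Over a pair of maps `Z ⟶ Uᵢ`, `Z ⟶ Uⱼ` agreeing in `∐ U`, this
is clear for `i = j` since coprojections are monic; for `i ≠ j` the object `Z` maps to the initial
object, which the empty family covers, so `F(Z)` is a singleton.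
-/

open CategoryTheory CategoryTheory.Limits

universe u

instance sheafTypeHasColimits_aux {C : Type u} [SmallCategory C] (J : GrothendieckTopology C) :
    HasColimitsOfSize.{u, u} (Sheaf J (Type u)) :=
  Sheaf.instHasColimitsOfSize

open Opposite

namespace CategoryTheory

universe v w u'

variable {C : Type u'} [Category.{v} C]

section GrothendieckTopology

variable {J : GrothendieckTopology C}

lemma GrothendieckTopology.bot_mem_of_hom {Y Z : C} (hZ : ⊥ ∈ J Z) (φ : Y ⟶ Z) : ⊥ ∈ J Y := by
  simpa only [Sieve.pullback_bot] using J.pullback_stable φ hZ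

lemma Sheaf.subsingleton_obj_of_bot_mem (F : Sheaf J (Type w)) {Y : C} (hY : ⊥ ∈ J Y) :
    Subsingleton (F.obj.obj (op Y)) :=
  (Types.isTerminalEquivUnique _ (F.isTerminalOfBotCover Y hY)).instSubsingleton

lemma Presieve.Arrows.compatible_of_mono_of_subsingleton {P : Cᵒᵖ ⥤ Type w} {ι : Type*} {X : C}
    {U : ι → C} (f : ∀ i, U i ⟶ X) [∀ i, Mono (f i)]
    (hdisj : ∀ i j, i ≠ j → ∀ {Z : C} (a : Z ⟶ U i) (b : Z ⟶ U j), a ≫ f i = b ≫ f j →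
      Subsingleton (P.obj (op Z)))
    (x : ∀ i, P.obj (op (U i))) : Presieve.Arrows.Compatible P f x := by
  intro i j Z a b hab
  by_cases hij : i = j
  · subst hij
    rw [cancel_mono] at hab
    rw [hab]
  · have := hdisj i j hij a b hab
    exact Subsingleton.elim _ _

variable [HasWeakSheafify J (Type v)]

noncomputable def presheafToSheafYonedaEquiv (X : C) (F : Sheaf J (Type v)) :
    ((presheafToSheaf J (Type v)).obj (yoneda.obj X) ⟶ F) ≃ F.obj.obj (op X) :=
  ((sheafificationAdjunction J (Type v)).homEquiv _ _).trans yonedaEquiv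

lemma presheafToSheafYonedaEquiv_comp {X Y : C} (g : X ⟶ Y) {F : Sheaf J (Type v)}
    (f : (presheafToSheaf J (Type v)).obj (yoneda.obj Y) ⟶ F) :
    presheafToSheafYonedaEquiv X F ((presheafToSheaf J (Type v)).map (yoneda.map g) ≫ f) =
      F.obj.map g.op (presheafToSheafYonedaEquiv Y F f) := by
  rw [presheafToSheafYonedaEquiv, Equiv.trans_apply, Adjunction.homEquiv_naturality_left]
  exact (yonedaEquiv_naturality _ _).symm

noncomputable def isColimitCofanMkPresheafToSheafYoneda {ι : Type*} {X : C} {U : ι → C}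
    (f : ∀ i, U i ⟶ X)
    (hF : ∀ (F : Sheaf J (Type v)) (x : ∀ i, F.obj.obj (op (U i))),
      ∃! t : F.obj.obj (op X), ∀ i, F.obj.map (f i).op t = x i) :
    IsColimit (Cofan.mk ((presheafToSheaf J (Type v)).obj (yoneda.obj X))
      fun i => (presheafToSheaf J (Type v)).map (yoneda.map (f i))) := by
  let e := presheafToSheafYonedaEquiv (J := J)
  let glue (t : Cofan _) := hF t.pt fun i => e _ t.pt (t.inj i)
  refine Cofan.IsColimit.mk _ (fun t => (e X t.pt).symm (glue t).choose) (fun t i => ?_)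
    (fun t m hm => ?_)
  · apply (e _ t.pt).injective
    rw [cofan_mk_inj, presheafToSheafYonedaEquiv_comp, Equiv.apply_symm_apply]
    exact (glue t).choose_spec.1 i
  · rw [Equiv.eq_symm_apply]
    refine (glue t).choose_spec.2 _ fun i => ?_
    rw [← presheafToSheafYonedaEquiv_comp, ← hm i, cofan_mk_inj]

end GrothendieckTopology

section Pretopology

variable [HasPullbacks C] {K : Pretopology C}

lemma Pretopology.isSheafFor_of_mem (F : Sheaf K.toGrothendieck (Type w)) {X : C}
    {R : Presieve X} (hR : R ∈ K X) : R.IsSheafFor F.obj :=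
  (Presieve.isSheaf_pretopology K).mp ((isSheaf_iff_isSheaf_of_type _ _).mp F.property) R hR

lemma Pretopology.bot_mem_toGrothendieck {X : C}
    (h : Presieve.ofArrows (fun e : PEmpty => e.elim) (fun e => e.elim) ∈ K X) :
    ⊥ ∈ K.toGrothendieck X :=
  ⟨_, h, by rw [Presieve.ofArrows_of_isEmpty]; exact bot_le⟩

end Pretopology

end CategoryTheory

theorem sheafification_preserves_finite_coproducts_of_disjoint
    {C : Type u} [SmallCategory C] [HasPullbacks C] [HasFiniteCoproducts C]
    (K : Pretopology C)
    (hmono : ∀ (σ : Type u) [Finite σ] (W : σ → C) (i : σ), Mono (Sigma.ι W i))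
    (hdisj : ∀ (σ : Type u) [Finite σ] (W : σ → C) (i j : σ), i ≠ j →
      Nonempty (IsInitial (pullback (Sigma.ι W i) (Sigma.ι W j))))
    (hempty : Presieve.ofArrows (fun e : PEmpty.{u + 1} => e.elim)
      (fun e => e.elim) ∈ K (⊥_ C))
    (hcoproj : ∀ (σ : Type u) [Finite σ] (W : σ → C),
      Presieve.ofArrows W (fun i => Sigma.ι W i) ∈ K (∐ W))
    (ι : Type u) [Finite ι] (U : ι → C) :
    IsIso (Limits.Sigma.desc (fun i =>
      (presheafToSheaf K.toGrothendieck (Type u)).map (yoneda.map (Sigma.ι U i)))) := by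
  have := hmono ι U
  have hbot : ⊥ ∈ K.toGrothendieck (⊥_ C) := Pretopology.bot_mem_toGrothendieck hempty
  have hglue (F : Sheaf K.toGrothendieck (Type u)) (x : ∀ i, F.obj.obj (op (U i))) :
      ∃! t, ∀ i, F.obj.map (Sigma.ι U i).op t = x i := by
    refine (Presieve.isSheafFor_arrows_iff _ _).mp (Pretopology.isSheafFor_of_mem F (hcoproj ι U))
      x (Presieve.Arrows.compatible_of_mono_of_subsingleton _ (fun i j hij Z a b hab => ?_) x)
    obtain ⟨hinit⟩ := hdisj ι U i j hij
    exact F.subsingleton_obj_of_bot_mem <|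
      GrothendieckTopology.bot_mem_of_hom hbot (pullback.lift a b hab ≫ hinit.to _)
  exact (Cofan.nonempty_isColimit_iff_isIso_sigmaDesc _).mp
    ⟨isColimitCofanMkPresheafToSheafYoneda _ hglue⟩
end

section
/- Let C be a category with pullbacks, finite coproducts, and colimits of simplicial objects (colimits indexed by Δ^op), and let J be a subcanonical Grothendieck topology on C generated by a pretopology τ. Assume: (1) every τ-covering family admits a finite subfamily which is again a τ-covering family; (2) for every finite family {U_i} of objects of C, the canonical morphism ∐_i yU_i → y(∐_i U_i) is an isomorphism in Sh(C, J); (3) for every τ-covering family {U_i → X}, writing U = ∐_i U_i and letting U_• → X be the Čech nerve of U → X in C (so U_n is the (n+1)-fold fibre product of U over X), the following co-cartesian descent condition holds: for every simplicial object Y_• of C equipped with a morphism Y_• → U_• which is co-cartesian (meaning that for every map [m] → [n] in Δ the induced morphism Y_m → Y_n ×_{U_n} U_m is an isomorphism), the canonical morphism |Y_•| ×_X U_n → Y_n is an isomorphism for every n, where |Y_•| denotes the colimit of Y_• over Δ^op. Then representable sheaves are closed under τ-descent: for every sheaf of types F on (C, J), every object X of C, every morphism F → yX in Sh(C, J), and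 every τ-covering family {U_i → X} such that each pullback F ×_{yX} yU_i in Sh(C, J) is representable, the sheaf F itself is representable. -/
/-!
Replace the covering family by a finite subfamily and put `π : E = ∐ Uᵢ ⟶ X`. Finite coproducts of
representables are representable and coproducts of sheaves are universal, so `F ×_{yX} yE` is
representable; since every level of the Čech nerve `Č(π)` maps to `X` through `E`, so is every
`F ×_{yX} yČ(π)ₙ`. By Yoneda these representing objects assemble into a simplicial object `Y` over
`Č(π)`, co-cartesian by pasting of pullbacks.

Now `F` and `y|Y|` both sit in pullback squares over `yX` with `yY_•` and `yČ(π)_•` (for `y|Y|`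
this is the descent hypothesis). Any such cocone on `yY_•` is a colimit: its leg at `⦋0⦌` is a
base change of the covering `yπ`, hence an epimorphism, hence effective, and its kernel pair is
covered by `yY₁` because `Č(π)₁ = E ×_X E`. Hence `F ≅ y|Y|`.
-/

open CategoryTheory CategoryTheory.Limits Opposite Simplicial

universe u

instance sheafType_hasColimitsOfShape_discrete {C : Type u} [SmallCategory C]
    (J : GrothendieckTopology C) (ι : Type u) [Finite ι] :
    HasColimitsOfShape (Discrete ι) (Sheaf J (Type u)) :=
  @Sheaf.instHasColimitsOfShape C _ J (Type u) _ (Discrete ι) _ inferInstance inferInstance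

namespace CategoryTheory

lemma Presieve.ofArrows_le_generateSingleton_sigmaDesc {C : Type*} [Category C] {ι : Type*}
    {X : C} {U : ι → C} [HasCoproduct U] (f : ∀ i, U i ⟶ X) :
    Presieve.ofArrows U f ≤ (Sieve.generateSingleton (Limits.Sigma.desc f)).arrows := by
  rintro _ _ ⟨i⟩
  exact ⟨Sigma.ι U i, Sigma.ι_desc f i⟩

@[simp]
lemma Arrow.cechNerve_map_comp_π {C : Type*} [Category C] [HasFiniteWidePullbacks C]
    (f : Arrow C) {m n : SimplexCategoryᵒᵖ} (α : m ⟶ n) (i : Fin (n.unop.len + 1)) :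
    f.cechNerve.map α ≫ WidePullback.π (fun _ => f.hom) i =
      WidePullback.π (fun _ => f.hom) (α.unop.toOrderHom i) :=
  WidePullback.lift_π _ _ _ _ _

@[simp]
lemma Arrow.cechNerve_map_comp_base {C : Type*} [Category C] [HasFiniteWidePullbacks C]
    (f : Arrow C) {m n : SimplexCategoryᵒᵖ} (α : m ⟶ n) :
    f.cechNerve.map α ≫ WidePullback.base (fun _ => f.hom) = WidePullback.base (fun _ => f.hom) :=
  WidePullback.lift_base _ _ _ _

section EssImage

variable {𝒞 𝒟 : Type*} [Category 𝒞] [Category 𝒟] (L : 𝒞 ⥤ 𝒟)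

lemma Functor.essImage_pullback_map_comp [L.Full] [PreservesLimitsOfShape WalkingCospan L]
    [HasPullbacks 𝒞] [HasPullbacks 𝒟] {F : 𝒟} {T E X : 𝒞} {φ : F ⟶ L.obj X} {π : E ⟶ X}
    (h : L.essImage (pullback φ (L.map π))) {k : T ⟶ E} {g : T ⟶ X} (w : k ≫ π = g) :
    L.essImage (pullback φ (L.map g)) := by
  subst w
  obtain ⟨W, ⟨e⟩⟩ := h
  let w : W ⟶ E := L.preimage (e.hom ≫ pullback.snd _ _)
  have sq : IsPullback (e.hom ≫ pullback.fst _ _) (L.map w) φ (L.map π) :=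
    IsPullback.of_iso_pullback ⟨by simp [w, pullback.condition]⟩ e rfl (by simp [w])
  have := ((IsPullback.of_hasPullback w k).map L).paste_horiz sq
  rw [← L.map_comp] at this
  exact ⟨_, ⟨this.isoPullback⟩⟩

lemma Functor.essImage_pullback_sigmaDesc [HasFiniteCoproducts 𝒞] [HasPullbacks 𝒟]
    [FinitaryPreExtensive 𝒟] {ι : Type*} [Finite ι]
    (hL : ∀ V : ι → 𝒞, IsIso (Limits.Sigma.desc fun i => L.map (Sigma.ι V i)))
    {X : 𝒞} {U : ι → 𝒞} (f : ∀ i, U i ⟶ X) {F : 𝒟} (φ : F ⟶ L.obj X)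
    (h : ∀ i, L.essImage (pullback φ (L.map (f i)))) :
    L.essImage (pullback φ (L.map (Limits.Sigma.desc f))) := by
  choose W e using h
  have hW (i : ι) : IsPullback ((e i).some.hom ≫ pullback.fst _ _)
      ((e i).some.hom ≫ pullback.snd _ _) φ (L.map (f i)) :=
    IsPullback.of_iso_pullback ⟨by simp [pullback.condition]⟩ (e i).some rfl rfl
  have hU := FinitaryPreExtensive.isUniversal_finiteCoproducts
    (Cofan.isColimitOfIsIsoSigmaDesc (hc := hL U) (Cofan.mk _ fun i => L.map (Sigma.ι U i)))
  have := hU.isPullback_of_isColimit_left _ (L.map (Limits.Sigma.desc f)) φ _ _ hW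
    (Cofan.isColimitOfIsIsoSigmaDesc (hc := hL W) (Cofan.mk _ fun i => L.map (Sigma.ι W i)))
    (fun i => by simp [← L.map_comp])
  exact ⟨∐ W, ⟨this.isoPullback⟩⟩

end EssImage

variable {C : Type u} [SmallCategory C] {J : GrothendieckTopology C} [J.Subcanonical]

instance GrothendieckTopology.preservesLimits_yoneda : PreservesLimits J.yoneda :=
  have : PreservesLimits (J.yoneda ⋙ sheafToPresheaf J (Type u)) :=
    preservesLimits_of_natIso J.yonedaCompSheafToPresheaf.symm
  preservesLimits_of_reflects_of_preserves _ (sheafToPresheaf J (Type u))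

namespace IsPullback

variable {A B X Z : C} {P : Sheaf J (Type u)} {fst : J.yoneda.obj A ⟶ P} {g : A ⟶ B}
  {ρ : P ⟶ J.yoneda.obj X} {h : B ⟶ X}

lemma exists_yoneda_lift (sq : IsPullback fst (J.yoneda.map g) ρ (J.yoneda.map h))
    (t : J.yoneda.obj Z ⟶ P) (b : Z ⟶ B) (w : t ≫ ρ = J.yoneda.map (b ≫ h)) :
    ∃ a : Z ⟶ A, J.yoneda.map a ≫ fst = t ∧ a ≫ g = b := by
  refine ⟨J.yoneda.preimage (sq.lift t (J.yoneda.map b) (by simpa using w)), by simp, ?_⟩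
  apply J.yoneda.map_injective
  simp

lemma yoneda_hom_ext (sq : IsPullback fst (J.yoneda.map g) ρ (J.yoneda.map h)) {a a' : Z ⟶ A}
    (h₁ : J.yoneda.map a ≫ fst = J.yoneda.map a' ≫ fst) (h₂ : a ≫ g = a' ≫ g) : a = a' :=
  J.yoneda.map_injective (sq.hom_ext h₁ (by simp [← Functor.map_comp, h₂]))

end IsPullback

section CechNerveCocone

variable [HasFiniteWidePullbacks C] {f : Arrow C} {Y : SimplicialObject C} {p : Y ⟶ f.cechNerve}
  {c : Cocone (Y ⋙ J.yoneda)} {ρ : c.pt ⟶ J.yoneda.obj f.right}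
  (hc : ∀ n, IsPullback (c.ι.app n) (J.yoneda.map (p.app n)) ρ
    (J.yoneda.map (WidePullback.base fun _ => f.hom)))
include hc

lemma isPullback_map_of_isPullback_ι {m n : SimplexCategoryᵒᵖ} (α : m ⟶ n) :
    IsPullback (Y.map α) (p.app m) (p.app n) (f.cechNerve.map α) := by
  refine IsPullback.of_map J.yoneda (p.naturality α) (IsPullback.of_right ?_ ?_ (hc n))
  · have hY : J.yoneda.map (Y.map α) ≫ c.ι.app n = c.ι.app m := c.w α
    rw [hY, ← Functor.map_comp, Arrow.cechNerve_map_comp_base]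
    exact hc m
  · simp [← Functor.map_comp]

lemma exists_δ_eq_of_yoneda_map_comp_ι_eq {V : C} {u₁ u₂ : V ⟶ Y _⦋0⦌}
    (h : J.yoneda.map u₁ ≫ c.ι.app _ = J.yoneda.map u₂ ≫ c.ι.app _) :
    ∃ S : V ⟶ Y _⦋1⦌, S ≫ Y.δ 1 = u₁ ∧ S ≫ Y.δ 0 = u₂ := by
  let u : Fin 2 → (V ⟶ Y _⦋0⦌) := ![u₁, u₂]
  have hu (j : Fin 2) : J.yoneda.map (u j) ≫ c.ι.app _ = J.yoneda.map u₁ ≫ c.ι.app _ := by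
    fin_cases j
    · rfl
    · exact h.symm
  let x := u₁ ≫ p.app _ ≫ WidePullback.base fun _ => f.hom
  have hx (j : Fin 2) : u j ≫ p.app _ ≫ WidePullback.base (fun _ => f.hom) = x :=
    J.yoneda.map_injective (by simp only [x, Functor.map_comp, ← (hc _).w, reassoc_of% hu j])
  let b : V ⟶ f.cechNerve _⦋1⦌ :=
    WidePullback.lift x (fun j => u j ≫ p.app _ ≫ WidePullback.π _ 0) fun j => by
      simpa using hx j
  have hb : b ≫ WidePullback.base (fun _ => f.hom) = x := WidePullback.lift_base _ _ _ _
  obtain ⟨S, hSc, hSp⟩ := (hc (op ⦋1⦌)).exists_yoneda_lift (J.yoneda.map u₁ ≫ c.ι.app _) b (by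
    rw [hb, Category.assoc, (hc _).w]
    simp [x])
  have hface (i j : Fin 2) (hij : (SimplexCategory.δ i).toOrderHom 0 = j) :
      S ≫ Y.δ i = u j := by
    refine (hc (op ⦋0⦌)).yoneda_hom_ext ?_ ?_
    · rw [hu, ← hSc, Functor.map_comp, Category.assoc]
      exact congr_arg _ (c.w (SimplexCategory.δ i).op)
    · rw [Category.assoc, SimplicialObject.δ, p.naturality, reassoc_of% hSp]
      apply WidePullback.hom_ext
      · intro k
        obtain rfl : k = 0 := Subsingleton.elim (α := Fin 1) _ _
        rw [Category.assoc, Arrow.cechNerve_map_comp_π, ← hij, Category.assoc]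
        exact WidePullback.lift_π (fun _ => f.hom) _ _ _ _
      · rw [Category.assoc, Arrow.cechNerve_map_comp_base, Category.assoc, hb, hx]
  exact ⟨S, hface 1 0 rfl, hface 0 1 rfl⟩

lemma yoneda_map_comp_ι_eq_of_yoneda_map_comp_ι_eq (s : Cocone (Y ⋙ J.yoneda)) {V : C}
    {u₁ u₂ : V ⟶ Y _⦋0⦌} (h : J.yoneda.map u₁ ≫ c.ι.app _ = J.yoneda.map u₂ ≫ c.ι.app _) :
    J.yoneda.map u₁ ≫ s.ι.app _ = J.yoneda.map u₂ ≫ s.ι.app _ := by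
  obtain ⟨S, rfl, rfl⟩ := exists_δ_eq_of_yoneda_map_comp_ι_eq hc h
  simp only [Functor.map_comp, Category.assoc]
  exact congr_arg _ ((s.w (SimplexCategory.δ 1).op).trans (s.w (SimplexCategory.δ 0).op).symm)

lemma epi_ι_zero_of_isPullback (hf : Sieve.generateSingleton f.hom ∈ J f.right) :
    Epi (c.ι.app (op ⦋0⦌)) := by
  rw [← Sheaf.isLocallySurjective_iff_epi]
  refine ⟨fun {V} t => J.superset_covering ?_ (J.pullback_stable (ρ.hom.app _ t) hf)⟩
  rintro Z g ⟨l, hl⟩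
  obtain ⟨a, ha, -⟩ := (hc (op ⦋0⦌)).exists_yoneda_lift
    (J.yonedaEquiv.symm (c.pt.obj.map g.op t))
    (WidePullback.lift (g ≫ ρ.hom.app _ t) (fun _ => l) (fun _ => hl)) (by
      apply J.yonedaEquiv.injective
      rw [GrothendieckTopology.yonedaEquiv_comp, Equiv.apply_symm_apply,
        GrothendieckTopology.yonedaEquiv_yoneda_map]
      exact (NatTrans.naturality_apply ρ.hom g.op t).trans (WidePullback.lift_base _ _ _ _).symm)
  have := congr_arg J.yonedaEquiv ha
  rw [GrothendieckTopology.yonedaEquiv_comp, GrothendieckTopology.yonedaEquiv_yoneda_map,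
    Equiv.apply_symm_apply] at this
  exact ⟨a, this⟩

noncomputable def isColimitOfIsPullbackCechNerve
    (hf : Sieve.generateSingleton f.hom ∈ J f.right) : IsColimit c :=
  have := epi_ι_zero_of_isPullback hc hf
  have := IsRegularEpiCategory.regularEpiOfEpi (c.ι.app (op ⦋0⦌))
  { desc s := EffectiveEpi.desc (c.ι.app (op ⦋0⦌)) (s.ι.app (op ⦋0⦌)) fun g₁ g₂ h =>
      J.hom_ext_yoneda fun V q => by
        obtain ⟨u₁, hu₁⟩ := J.yoneda.map_surjective (q ≫ g₁)
        obtain ⟨u₂, hu₂⟩ := J.yoneda.map_surjective (q ≫ g₂)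
        simpa [hu₁, hu₂] using yoneda_map_comp_ι_eq_of_yoneda_map_comp_ι_eq hc s
          (u₁ := u₁) (u₂ := u₂) (by simp [hu₁, hu₂, h])
    fac s n := by
      rw [← c.w (SimplexCategory.const ⦋0⦌ n.unop 0).op, Category.assoc, EffectiveEpi.fac]
      exact s.w _
    uniq s m hm := by
      rw [← cancel_epi (c.ι.app (op ⦋0⦌)), EffectiveEpi.fac]
      exact hm _ }

end CechNerveCocone

section BaseChange

variable [HasFiniteWidePullbacks C] (f : Arrow C) {F : Sheaf J (Type u)}
  (φ : F ⟶ J.yoneda.obj f.right)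

noncomputable def cechNerveBaseChange : SimplexCategoryᵒᵖ ⥤ Sheaf J (Type u) where
  obj n := pullback φ (J.yoneda.map (WidePullback.base fun _ : Fin (n.unop.len + 1) => f.hom))
  map α := pullback.lift (pullback.fst _ _) (pullback.snd _ _ ≫ J.yoneda.map (f.cechNerve.map α))
    (by simp [-Arrow.cechNerve_map, pullback.condition, ← Functor.map_comp])
  map_id n := by apply pullback.hom_ext <;> simp [-Arrow.cechNerve_map]
  map_comp α β := by
    apply pullback.hom_ext
    · simp only [Category.assoc, pullback.lift_fst]
    · simp only [Category.assoc, pullback.lift_snd, pullback.lift_snd_assoc, Functor.map_comp]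

lemma essImage_cechNerveBaseChange_obj
    (hF : J.yoneda.essImage (pullback φ (J.yoneda.map f.hom))) (n : SimplexCategoryᵒᵖ) :
    J.yoneda.essImage ((cechNerveBaseChange f φ).obj n) :=
  J.yoneda.essImage_pullback_map_comp hF (WidePullback.π_arrow _ 0)

variable {f φ}

lemma exists_isPullback_yoneda_cechNerve
    (hF : J.yoneda.essImage (pullback φ (J.yoneda.map f.hom))) :
    ∃ (Y : SimplicialObject C) (p : Y ⟶ f.cechNerve)
      (ι : Y ⋙ J.yoneda ⟶ (Functor.const _).obj F), ∀ n, IsPullback (ι.app n)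
        (J.yoneda.map (p.app n)) φ (J.yoneda.map (WidePullback.base fun _ => f.hom)) := by
  let e := Functor.essImage.liftFunctorCompIso _ _ (essImage_cechNerveBaseChange_obj f φ hF)
  let snd : cechNerveBaseChange f φ ⟶ f.cechNerve ⋙ J.yoneda :=
    { app n := pullback.snd _ _
      naturality _ _ _ := pullback.lift_snd _ _ _ }
  let fst : cechNerveBaseChange f φ ⟶ (Functor.const _).obj F :=
    { app n := pullback.fst _ _
      naturality _ _ _ := (pullback.lift_fst _ _ _).trans (Category.comp_id _).symm }
  let p := (J.yonedaFullyFaithful.whiskeringRight _).preimage (e.hom ≫ snd)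
  have hp (n) : J.yoneda.map (p.app n) = e.hom.app n ≫ pullback.snd _ _ :=
    NatTrans.congr_app ((J.yonedaFullyFaithful.whiskeringRight _).map_preimage _) n
  refine ⟨_, p, e.hom ≫ fst, fun n => IsPullback.of_iso_pullback ⟨?_⟩ (e.app n) rfl (hp n).symm⟩
  rw [hp, NatTrans.comp_app]
  simp only [Category.assoc]
  exact congr_arg _ pullback.condition

end BaseChange

def HasCechDescent [HasFiniteWidePullbacks C] [HasColimitsOfShape SimplexCategoryᵒᵖ C]
    (f : Arrow C) : Prop :=
  ∀ (Y : SimplicialObject C) (p : Y ⟶ f.augmentedCechNerve.left),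
    (∀ ⦃m n : SimplexCategoryᵒᵖ⦄ (α : m ⟶ n),
      IsPullback (Y.map α) (p.app m) (p.app n) (f.augmentedCechNerve.left.map α)) →
    ∀ (q : colimit Y ⟶ f.right),
      (∀ k, colimit.ι Y k ≫ q = p.app k ≫ f.augmentedCechNerve.hom.app k) →
      ∀ n, IsPullback (colimit.ι Y n) (p.app n) q (f.augmentedCechNerve.hom.app n)

theorem essImage_yoneda_of_hasCechDescent [HasFiniteWidePullbacks C]
    [HasColimitsOfShape SimplexCategoryᵒᵖ C] {f : Arrow C}
    (hf : Sieve.generateSingleton f.hom ∈ J f.right) (hdesc : HasCechDescent f)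
    {F : Sheaf J (Type u)} (φ : F ⟶ J.yoneda.obj f.right)
    (hF : J.yoneda.essImage (pullback φ (J.yoneda.map f.hom))) : J.yoneda.essImage F := by
  obtain ⟨Y, p, ι, hι⟩ := exists_isPullback_yoneda_cechNerve hF
  let q : colimit Y ⟶ f.right := colimit.desc Y ⟨f.right, p ≫ f.augmentedCechNerve.hom⟩
  have hq := hdesc Y p (fun _ _ => isPullback_map_of_isPullback_ι (c := ⟨F, ι⟩) hι) q
    (colimit.ι_desc _)
  have hY := isColimitOfIsPullbackCechNerve (c := J.yoneda.mapCocone (colimit.cocone Y))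
    (fun n => (hq n).map J.yoneda) hf
  exact ⟨colimit Y,
    ⟨hY.coconePointUniqueUpToIso (isColimitOfIsPullbackCechNerve (c := ⟨F, ι⟩) hι hf)⟩⟩

end CategoryTheory

theorem representables_closed_under_descent_of_cechDescent
    {C : Type u} [SmallCategory C] [HasFiniteWidePullbacks C] [HasFiniteCoproducts C]
    [HasColimitsOfShape SimplexCategoryᵒᵖ C]
    (K : Pretopology C) [(K.toGrothendieck).Subcanonical]
    -- (1) every covering family admits a finite covering subfamily
    (hfin : ∀ (X : C) (ι : Type u) (U : ι → C) (f : ∀ i, U i ⟶ X),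
      Presieve.ofArrows U f ∈ K X →
      ∃ s : Set ι, s.Finite ∧
        Presieve.ofArrows (fun i : s => U i) (fun i : s => f i) ∈ K X)
    -- (2) for finite families, `∐ yUᵢ ⟶ y(∐ Uᵢ)` is an isomorphism of sheaves
    (hcoprod : ∀ (ι : Type u) [Finite ι] (U : ι → C),
      IsIso (Limits.Sigma.desc (fun i => (K.toGrothendieck).yoneda.map (Limits.Sigma.ι U i))))
    -- (3) Čech nerves of covering families satisfy the co-cartesian descent condition
    (hdesc : ∀ (X : C) (ι : Type u) (U : ι → C) [HasCoproduct U] (f : ∀ i, U i ⟶ X),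
      Presieve.ofArrows U f ∈ K X →
      ∀ (Y : SimplicialObject C)
        (p : Y ⟶ (Arrow.mk (Limits.Sigma.desc f : (∐ U) ⟶ X)).augmentedCechNerve.left),
        -- `p` is co-cartesian: every naturality square is a pullback
        (∀ ⦃m n : SimplexCategoryᵒᵖ⦄ (α : m ⟶ n),
          IsPullback (Y.map α) (p.app m) (p.app n)
            ((Arrow.mk (Limits.Sigma.desc f : (∐ U) ⟶ X)).augmentedCechNerve.left.map α)) →
        -- then `|Y| ×_X (Čech nerve)ₙ ≅ Yₙ` for every `n`
        ∀ (q : colimit Y ⟶ X),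
          (∀ k, colimit.ι Y k ≫ q =
            p.app k ≫ (Arrow.mk (Limits.Sigma.desc f : (∐ U) ⟶ X)).augmentedCechNerve.hom.app k) →
          ∀ n : SimplexCategoryᵒᵖ,
            IsPullback (colimit.ι Y n) (p.app n) q
              ((Arrow.mk (Limits.Sigma.desc f : (∐ U) ⟶ X)).augmentedCechNerve.hom.app n)) :
    -- conclusion: representable sheaves are closed under `K`-descent
    ∀ (F : Sheaf (K.toGrothendieck) (Type u)) (X : C)
      (φ : F ⟶ (K.toGrothendieck).yoneda.obj X)
      (ι : Type u) (U : ι → C) (f : ∀ i, U i ⟶ X),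
      Presieve.ofArrows U f ∈ K X →
      (∀ i, ∃ W : C,
        Nonempty (pullback φ ((K.toGrothendieck).yoneda.map (f i)) ≅
          (K.toGrothendieck).yoneda.obj W)) →
      ∃ W : C, Nonempty (F ≅ (K.toGrothendieck).yoneda.obj W) := by
  intro F X φ ι U f hcov hrep
  obtain ⟨s, hs, hscov⟩ := hfin X ι U f hcov
  have : Finite s := hs.to_subtype
  have hrep' (i : s) : (K.toGrothendieck).yoneda.essImage
      (pullback φ ((K.toGrothendieck).yoneda.map (f i))) :=
    have ⟨W, ⟨e⟩⟩ := hrep i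
    ⟨W, ⟨e.symm⟩⟩
  obtain ⟨W, ⟨e⟩⟩ := essImage_yoneda_of_hasCechDescent
    (f := Arrow.mk (Limits.Sigma.desc fun i : s => f i))
    ((K.mem_toGrothendieck _ _).mpr ⟨_, hscov, Presieve.ofArrows_le_generateSingleton_sigmaDesc _⟩)
    (hdesc X s _ _ hscov) φ
    ((K.toGrothendieck).yoneda.essImage_pullback_sigmaDesc (hcoprod s) _ φ hrep')
  exact ⟨W, ⟨e.symm⟩⟩
end

section
/- Let C be a category with pullbacks and J a subcanonical Grothendieck topology on C generated by a pretopology τ. Assume representable sheaves are closed under τ-descent: for every sheaf of types G on (C, J), every object Z of C, every morphism G → yZ, and every τ-covering family {V_k → Z} such that each pullback G ×_{yZ} yV_k is representable, the sheaf G is representable. Let F be a sheaf of types on (C, J) admitting a family of morphisms {u_i : yU_i → F}_{i∈I} with U_i ∈ C such that: (a) the induced morphism ∐_{i∈I} yU_i → F is an epimorphism of sheaves, and (b) for every i ∈ I, every object X of C, and every morphism yX → F, the pullback yU_i ×_F yX in Sh(C, J) is representable. Then the diagonal of F is representable: for all objects X, Y of C and all morphisms yX → F and yY → F, the pullback yX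 ×_F yY in Sh(C, J) is representable. (This is the bottom level of the paper's proposition that, when the affine objects are closed under τ-descent, a stack admitting an n-atlas is automatically n-geometric.) -/
/-!
STATEMENT 4: Let `(C, J)` be a subcanonical site with topology generated by a
pretopology `K`, such that representable sheaves are closed under `K`-descent.
If a sheaf of types `F` admits a family `{u i : yU i ⟶ F}` which is jointly
epimorphic (the induced map from the coproduct is an epimorphism of sheaves)
and whose members are representable morphisms (all pullbacks `yU i ×_F yX` are
representable), then the diagonal of `F` is representable: all pullbacks
`yX ×_F yY` of representables over `F` are representable.
-/

open CategoryTheory CategoryTheory.Limits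

universe u

/-- Shortcut instance: type class search no longer finds colimits in `Sheaf J (Type u)`
in reasonable time (it finds the same Mathlib instance, `Sheaf.instHasColimitsOfSize`). -/
instance sheafTypeHasColimitsOfSize {C : Type u} [SmallCategory C] (J : GrothendieckTopology C) :
    HasColimitsOfSize.{u, u} (Sheaf J (Type u)) :=
  @Sheaf.instHasColimitsOfSize C _ J (Type u) _ inferInstance inferInstance

/-!
Since `∐ yU i ⟶ F` is an epimorphism of sheaves, it is locally surjective, so `x : yX ⟶ F`
factors through some `u i` on each member `V ⟶ X` of a `K`-covering family. On such a member,
`yV ×_{yX} (yX ×_F yY) ≅ yV ×_{yU i} (yU i ×_F yY)` is a pullback of representables over a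
representable, hence representable because `J.yoneda` preserves pullbacks. Descent along the
covering family then makes `yX ×_F yY` representable.
-/

open Opposite

namespace CategoryTheory.Limits

noncomputable def pullbackPullbackFstIsoOfFac {D : Type*} [Category D] [HasPullbacks D]
    {X Y Z A B : D} {x : X ⟶ Z} (y : Y ⟶ Z) {u : A ⟶ Z} {g : B ⟶ X} {h : B ⟶ A}
    (w : g ≫ x = h ≫ u) : pullback (pullback.fst x y) g ≅ pullback h (pullback.fst u y) :=
  pullbackSymmetry _ _ ≪≫ pullbackRightPullbackFstIso x y g ≪≫
    pullback.congrHom w rfl ≪≫ (pullbackRightPullbackFstIso u y h).symm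

end CategoryTheory.Limits

namespace CategoryTheory

section

variable {C : Type u} [SmallCategory C] {J : GrothendieckTopology C}

/-- The sheaf coproduct is the sheafification of the presheaf coproduct, so this map factors as
the locally surjective unit of sheafification followed by an epimorphism of sheaves. -/
theorem Sheaf.isLocallySurjective_sigmaDesc_hom {ι : Type u} {G : ι → Sheaf J (Type u)}
    {F : Sheaf J (Type u)} (f : ∀ i, G i ⟶ F) [Epi (Limits.Sigma.desc f)] :
    Presheaf.IsLocallySurjective J (Limits.Sigma.desc fun i => (f i).hom) := by
  let E : Cocone (Discrete.functor G ⋙ sheafToPresheaf J _) :=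
    (Cocone.precompose (Discrete.compNatIsoDiscrete G _).hom).obj (colimit.cocone _)
  let hc := Sheaf.isColimitSheafifyCocone E
    ((IsColimit.precomposeHomEquiv _ _).symm (colimit.isColimit _))
  let φ : (Sheaf.sheafifyCocone E).pt ⟶ F := hc.desc (Cofan.mk F f)
  have : Epi φ := by
    rw [show φ = (hc.coconePointUniqueUpToIso (colimit.isColimit _)).hom ≫
      Limits.Sigma.desc f from hc.hom_ext fun ⟨i⟩ => by simp [φ]]
    infer_instance
  have hφ : Presheaf.IsLocallySurjective J φ.hom := (Sheaf.isLocallySurjective_iff_epi φ).2 this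
  have fac : Limits.Sigma.desc (fun i => (f i).hom) = toSheafify J E.pt ≫ φ.hom := by
    ext1 i
    have hι : E.ι.app ⟨i⟩ = Limits.Sigma.ι (fun i => (G i).obj) i := by simp [E]; rfl
    have h := congrArg InducedCategory.Hom.hom (hc.fac (Cofan.mk F f) ⟨i⟩)
    rw [ObjectProperty.FullSubcategory.comp_hom, Sheaf.sheafifyCocone_ι_app_val, hι] at h
    rw [colimit.ι_desc]
    exact h.symm.trans (Category.assoc _ _ _)
  rw [fac]
  exact @Presheaf.isLocallySurjective_comp _ _ J _ _ _ _ _ _ _ _ _ _ _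
    (Presheaf.isLocallySurjective_toSheafify' J E.pt) hφ

theorem Sheaf.iSup_imageSieve_mem {ι : Type u} {G : ι → Sheaf J (Type u)}
    {F : Sheaf J (Type u)} (f : ∀ i, G i ⟶ F) [Epi (Limits.Sigma.desc f)] {X : C}
    (s : F.obj.obj (op X)) :
    (⨆ i, Presheaf.imageSieve (f i).hom s) ∈ J X := by
  have := Sheaf.isLocallySurjective_sigmaDesc_hom f
  refine J.superset_covering ?_
    (Presheaf.imageSieve_mem J (Limits.Sigma.desc fun i => (f i).hom) s)
  rintro V g ⟨t, ht⟩
  obtain ⟨⟨i⟩, t, rfl⟩ := Types.jointly_surjective_of_isColimit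
    (isColimitOfPreserves ((evaluation _ _).obj (op V)) (colimit.isColimit _)) t
  refine (Sieve.sSup_apply _).2 ⟨_, ⟨i, rfl⟩, t, ?_⟩
  rw [← ht]
  exact (ConcreteCategory.congr_hom
    (NatTrans.congr_app (Limits.Sigma.ι_desc (fun i => (f i).hom) i) _) t).symm

theorem GrothendieckTopology.exists_yoneda_map_comp_eq_of_mem_imageSieve [J.Subcanonical]
    {F : Sheaf J (Type u)} {U X V : C} (u : J.yoneda.obj U ⟶ F) (x : J.yoneda.obj X ⟶ F)
    {g : V ⟶ X} (hg : Presheaf.imageSieve u.hom (J.yonedaEquiv x) g) :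
    ∃ h : V ⟶ U, J.yoneda.map g ≫ x = J.yoneda.map h ≫ u := by
  obtain ⟨h, hh⟩ := hg
  refine ⟨h, J.yonedaEquiv.injective ?_⟩
  rw [← J.yonedaEquiv_naturality, J.yonedaEquiv_comp, J.yonedaEquiv_yoneda_map]
  exact hh.symm

theorem GrothendieckTopology.exists_iso_yoneda_pullback_yoneda_map [HasPullbacks C]
    [J.Subcanonical] {A B : C} (h : B ⟶ A) {P : Sheaf J (Type u)} (q : P ⟶ J.yoneda.obj A)
    (hP : ∃ W : C, Nonempty (P ≅ J.yoneda.obj W)) :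
    ∃ W : C, Nonempty (Limits.pullback (J.yoneda.map h) q ≅ J.yoneda.obj W) := by
  obtain ⟨W, ⟨e⟩⟩ := hP
  let p : W ⟶ A := J.yoneda.preimage (e.inv ≫ q)
  refine ⟨Limits.pullback h p, ⟨?_ ≪≫ (PreservesPullback.iso J.yoneda h p).symm⟩⟩
  exact asIso (pullback.map _ _ _ _ (𝟙 _) e.hom (𝟙 _) (by simp) (by simp [p]))

end

end CategoryTheory

theorem diagonal_representable_of_atlas
    {C : Type u} [SmallCategory C] [HasPullbacks C]
    (K : Pretopology C) [(K.toGrothendieck).Subcanonical]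
    -- representable sheaves are closed under `K`-descent
    (hdescent : ∀ (G : Sheaf (K.toGrothendieck) (Type u)) (Z : C)
      (φ : G ⟶ (K.toGrothendieck).yoneda.obj Z)
      (κ : Type u) (V : κ → C) (g : ∀ k, V k ⟶ Z),
      Presieve.ofArrows V g ∈ K Z →
      (∀ k, ∃ W : C,
        Nonempty ((pullback φ ((K.toGrothendieck).yoneda.map (g k))) ≅
          (K.toGrothendieck).yoneda.obj W)) →
      ∃ W : C, Nonempty (G ≅ (K.toGrothendieck).yoneda.obj W))
    (F : Sheaf (K.toGrothendieck) (Type u))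
    {ι : Type u} (U : ι → C) (u : ∀ i, (K.toGrothendieck).yoneda.obj (U i) ⟶ F)
    -- (a) the family is jointly epimorphic
    (hepi : Epi (Limits.Sigma.desc u))
    -- (b) each `u i` is a representable morphism
    (hrep : ∀ (i : ι) (X : C) (x : (K.toGrothendieck).yoneda.obj X ⟶ F),
      ∃ W : C, Nonempty (pullback (u i) x ≅ (K.toGrothendieck).yoneda.obj W)) :
    ∀ (X Y : C) (x : (K.toGrothendieck).yoneda.obj X ⟶ F)
      (y : (K.toGrothendieck).yoneda.obj Y ⟶ F),
      ∃ W : C, Nonempty (pullback x y ≅ (K.toGrothendieck).yoneda.obj W) := by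
  intro X Y x y
  obtain ⟨R, hR, hRS⟩ := Sheaf.iSup_imageSieve_mem u ((K.toGrothendieck).yonedaEquiv x)
  obtain ⟨κ, V, g, rfl⟩ := Presieve.exists_eq_ofArrows R
  refine hdescent (pullback x y) X (pullback.fst x y) κ V g hR fun k => ?_
  obtain ⟨_, ⟨i, rfl⟩, hi⟩ := (Sieve.sSup_apply _).1 (hRS _ _ (Presieve.ofArrows.mk k))
  obtain ⟨h, hh⟩ := GrothendieckTopology.exists_yoneda_map_comp_eq_of_mem_imageSieve _ _ hi
  obtain ⟨W, ⟨e⟩⟩ :=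
    GrothendieckTopology.exists_iso_yoneda_pullback_yoneda_map h _ (hrep i Y y)
  exact ⟨W, ⟨pullbackPullbackFstIsoOfFac y hh ≪≫ e⟩⟩
end

section
/- Let R be a commutative ring, A a commutative R-algebra, and B a commutative A-algebra which is formally smooth over A (every A-algebra homomorphism from B to a quotient of a commutative A-algebra by a square-zero ideal lifts along the quotient map). Let M be an A-module and let d : A → M be an R-linear derivation. Then there exists an R-linear derivation D : B → B ⊗_A M such that D(algebraMap A B a) = 1 ⊗ d(a) for all a ∈ A, where B ⊗_A M carries its natural B-module structure. (This is the discrete instance of the paper's lemma that a derivation d ∈ π₀(Der(A, M)) lifts along a formally smooth morphism A → B to a derivation d′ ∈ π₀(Der(B, M ⊗_A B)).) -/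
/-!
A derivation `d : A → N` into a `B`-module gives the ring map `a ↦ (a, d a)` into the trivial
square-zero extension `B ⊕ N`. Using this map to make `B ⊕ N` an `A`-algebra, the first projection `B ⊕ N → B` becomes a surjective `A`-algebra map with
square-zero kernel, so formal smoothness lifts `id_B` to an `A`-algebra section `b ↦ (b, D b)`.
Multiplicativity of the section is the Leibniz rule for `D`, and compatibility with `A` says that
`D` extends `d`. Taking `N = B ⊗[A] M` and `a ↦ 1 ⊗ d a` gives the theorem.
-/

open TensorProduct TrivSqZeroExt

universe u

namespace Derivation

section

variable {R A B N : Type*} [CommRing R] [CommRing A] [CommRing B] [Algebra R A] [Algebra A B]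
  [AddCommGroup N] [Module A N] [Module B N] [Module Bᵐᵒᵖ N] [IsCentralScalar B N]
  [IsScalarTower A B N] [Module R N]

def toTrivSqZeroExt (d : Derivation R A N) : A →+* TrivSqZeroExt B N where
  toFun a := (algebraMap A B a, d a)
  map_one' := TrivSqZeroExt.ext (map_one _) d.map_one_eq_zero
  map_mul' a a' := TrivSqZeroExt.ext (map_mul _ a a') <| by
    change d (a * a') = algebraMap A B a • d a' + MulOpposite.op (algebraMap A B a') • d a
    rw [op_smul_eq_smul, algebraMap_smul, algebraMap_smul, d.leibniz]
  map_zero' := TrivSqZeroExt.ext (map_zero _) d.map_zero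
  map_add' a a' := TrivSqZeroExt.ext (map_add _ a a') (d.map_add a a')

end

section

variable {R B N : Type*} [CommRing R] [CommRing B] [Algebra R B]
  [AddCommGroup N] [Module B N] [Module Bᵐᵒᵖ N] [IsCentralScalar B N]
  [Module R N] [IsScalarTower R B N]

def ofTrivSqZeroExtSection (σ : B →+* TrivSqZeroExt B N) (hσ : ∀ b, (σ b).fst = b)
    (hR : ∀ r : R, σ (algebraMap R B r) = inl (algebraMap R B r)) : Derivation R B N where
  toFun b := (σ b).snd
  map_add' b b' := by rw [map_add, snd_add]
  map_smul' r b := by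
    rw [Algebra.smul_def, map_mul, hR, snd_mul, fst_inl, snd_inl, smul_zero, add_zero,
      algebraMap_smul, RingHom.id_apply]
  map_one_eq_zero' := by
    change (σ 1).snd = 0
    rw [map_one, snd_one]
  leibniz' b b' := by
    change (σ (b * b')).snd = b • (σ b').snd + b' • (σ b).snd
    rw [map_mul, snd_mul, hσ, hσ, op_smul_eq_smul]

end

variable {R A B N : Type*} [CommRing R] [CommRing A] [CommRing B] [Algebra R A] [Algebra A B]
  [Algebra R B] [IsScalarTower R A B] [Algebra.FormallySmooth A B]
  [AddCommGroup N] [Module A N] [Module B N] [IsScalarTower A B N] [Module R N] [IsScalarTower R B N]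

theorem compAlgebraMap_surjective_of_formallySmooth :
    Function.Surjective (compAlgebraMap A : Derivation R B N → Derivation R A N) := by
  intro d
  let : Module Bᵐᵒᵖ N := Module.compHom N (RingEquiv.toOpposite B).symm.toRingHom
  have : IsCentralScalar B N := ⟨fun _ _ => rfl⟩
  let := (d.toTrivSqZeroExt (B := B)).toAlgebra
  let π : TrivSqZeroExt B N →ₐ[A] B := { fstHom B B N with commutes' := fun _ => rfl }
  let σ := Algebra.FormallySmooth.liftOfSurjective (AlgHom.id A B) π
    (fun b => ⟨inl b, rfl⟩) ⟨2, kerIdeal_sq B N⟩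
  have hσ (b : B) : (σ b).fst = b := Algebra.FormallySmooth.liftOfSurjective_apply _ π _ _ b
  have hσA (a : A) : σ (algebraMap A B a) = d.toTrivSqZeroExt a := σ.commutes a
  refine ⟨ofTrivSqZeroExtSection (σ : B →+* TrivSqZeroExt B N) hσ fun r => ?_, ?_⟩
  · rw [IsScalarTower.algebraMap_apply R A B, RingHom.coe_coe, hσA]
    exact TrivSqZeroExt.ext rfl (d.map_algebraMap r)
  · ext a
    exact congr_arg snd (hσA a)

end Derivation

theorem derivation_lift_of_formallySmooth
    (R A B : Type u)
    [CommRing R] [CommRing A] [CommRing B]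
    [Algebra R A] [Algebra A B] [Algebra R B] [IsScalarTower R A B]
    [Algebra.FormallySmooth A B]
    (M : Type u) [AddCommGroup M] [Module A M] [Module R M] [IsScalarTower R A M]
    (d : Derivation R A M) :
    ∃ D : Derivation R B (B ⊗[A] M),
      ∀ a : A, D (algebraMap A B a) = (1 : B) ⊗ₜ[A] d a := by
  obtain ⟨D, hD⟩ := Derivation.compAlgebraMap_surjective_of_formallySmooth (R := R) (B := B)
    ((TensorProduct.mk A B M 1).compDer d)
  exact ⟨D, Derivation.congr_fun hD⟩
end
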